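/- Let α, λ, μ be rational numbers, let s assign a rational number s_I to each 4-element subset I of {1,…,7}, and let p_1,…,p_7 be rationals. If (s,p) is F-nef with parameters (α,λ,μ), then for every 2-element subset {i,j} of {1,…,7}: 18·c_{ij} + (−8α − 18λ + 10μ)(p_i + p_j) + (−4α − 18λ + 10μ)·∑_{k∉{i,j}} p_k ≥ 0, where c_{ij} = (1/3)·∑_{I ⊇ {i,j}} s_I + (α+λ)(p_i + p_j) + λ·∑_{k∉{i,j}} p_k (the sum over I ranging over 4-element subsets of {1,…,7}). -/

import Mathlib

/-!
Sum the `(1:1:2:3)` F-inequalities with `A = {i}`, `B = {j}` over the ten choices of the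
2-element part `C ⊆ {i, j}ᶜ`. A quadruple `I ⊇ {i, j}` is transversal for exactly `2 · 3 = 6`
of them, and each `k ∉ {i, j}` lies in `C` for four choices and in `D` for the other six, so
the sum of the ten inequalities is exactly the claimed one.
-/

open Finset

/-- `(s, p)` is F-nef with parameters `(a, l, m)` (`α`, `λ`, `μ`): the value of the
divisor `D = ∑ s_I S_I + ∑ p_i P_i` on every F-curve of `M̄_{0,7}` is nonnegative,
for the three combinatorial types `(1:1:1:4)`, `(1:1:2:3)`, `(1:2:2:2)` of partitions
`(A,B,C,D)` of the marked points. -/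
def FNef (a l m : ℚ) (s : Finset (Fin 7) → ℚ) (p : Fin 7 → ℚ) : Prop :=
  ∀ A B C D : Finset (Fin 7),
    Disjoint A B → Disjoint A C → Disjoint A D →
    Disjoint B C → Disjoint B D → Disjoint C D →
    A ∪ B ∪ C ∪ D = univ →
    A.Nonempty → B.Nonempty → C.Nonempty → D.Nonempty →
    ((A.card = 1 ∧ B.card = 1 ∧ C.card = 1 ∧ D.card = 4 →
        0 ≤ (∑ I ∈ univ.filter (fun I : Finset (Fin 7) => I.card = 4 ∧
                (I ∩ A).card = 1 ∧ (I ∩ B).card = 1 ∧ (I ∩ C).card = 1 ∧ (I ∩ D).card = 1),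
              s I)
            + (2*a + 3*l - m) * (∑ i ∈ A ∪ B ∪ C, p i)
            + (3*l - m) * (∑ j ∈ D, p j)) ∧
     (A.card = 1 ∧ B.card = 1 ∧ C.card = 2 ∧ D.card = 3 →
        0 ≤ (∑ I ∈ univ.filter (fun I : Finset (Fin 7) => I.card = 4 ∧
                (I ∩ A).card = 1 ∧ (I ∩ B).card = 1 ∧ (I ∩ C).card = 1 ∧ (I ∩ D).card = 1),
              s I)
            + (a + m) * (∑ i ∈ A ∪ B, p i)
            + (-a + m) * (∑ j ∈ C, p j)
            + m * (∑ k ∈ D, p k)) ∧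
     (A.card = 1 ∧ B.card = 2 ∧ C.card = 2 ∧ D.card = 2 →
        0 ≤ (∑ I ∈ univ.filter (fun I : Finset (Fin 7) => I.card = 4 ∧
                (I ∩ A).card = 1 ∧ (I ∩ B).card = 1 ∧ (I ∩ C).card = 1 ∧ (I ∩ D).card = 1),
              s I)
            + 3*(m - l) * (∑ i ∈ A, p i)
            + (-a + 3*(m - l)) * (∑ j ∈ B ∪ C ∪ D, p j)))

/-- The coefficient `c_J` of the boundary divisor `Δ_J` in the obvious representative of
`D = ∑ s_I S_I + ∑ p_i P_i`, for `J` of cardinality 2 or 3. -/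
def cJ (a l m : ℚ) (s : Finset (Fin 7) → ℚ) (p : Fin 7 → ℚ) (J : Finset (Fin 7)) : ℚ :=
  if J.card = 2 then
    (1/3) * (∑ I ∈ univ.filter (fun I : Finset (Fin 7) => I.card = 4 ∧ J ⊆ I), s I)
      + (a + l) * (∑ i ∈ J, p i) + l * (∑ k ∈ Jᶜ, p k)
  else
    (1/3) * (∑ I ∈ univ.filter (fun I : Finset (Fin 7) => I.card = 4 ∧ (I ∩ J).card = 2), s I)
      + m * (∑ k, p k)

section Counting

variable {α : Type*} [DecidableEq α]

theorem card_filter_powersetCard_two_card_inter_eq_one (K T : Finset α) :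
    #{C ∈ K.powersetCard 2 | #(T ∩ C) = 1} = #(T ∩ K) * #(K \ T) := by
  rw [← card_product]
  symm
  refine card_bij (fun tu _ => {tu.1, tu.2}) ?_ ?_ ?_
  · rintro ⟨t, u⟩ h
    simp only [mem_product, mem_inter, mem_sdiff] at h
    have htu : t ≠ u := by rintro rfl; exact h.2.2 h.1.1
    have : T ∩ {t, u} = {t} := by grind
    simp [mem_powersetCard, insert_subset_iff, h.1.2, h.2.1, card_pair htu, this]
  · rintro ⟨t, u⟩ h ⟨t', u'⟩ h' heq
    simp only [mem_product, mem_inter, mem_sdiff] at h h'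
    have ht : t ∈ ({t', u'} : Finset α) := heq ▸ mem_insert_self _ _
    have hu : u ∈ ({t', u'} : Finset α) := heq ▸ mem_insert_of_mem (mem_singleton_self _)
    simp only [mem_insert, mem_singleton] at ht hu
    grind
  · intro C hC
    simp only [mem_filter, mem_powersetCard] at hC
    obtain ⟨⟨hCK, hC2⟩, hTC⟩ := hC
    obtain ⟨x, y, hxy, rfl⟩ := card_eq_two.mp hC2
    by_cases hx : x ∈ T <;> by_cases hy : y ∈ T
    · simp [hx, hy, card_pair hxy] at hTC
    · exact ⟨(x, y), by grind, rfl⟩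
    · exact ⟨(y, x), by grind, pair_comm y x⟩
    · simp [hx, hy] at hTC

theorem card_inter_singleton_eq_one_iff {I : Finset α} {i : α} : #(I ∩ {i}) = 1 ↔ i ∈ I := by
  by_cases hi : i ∈ I <;> simp [hi, inter_singleton_of_mem, inter_singleton_of_notMem]

theorem transversal_singleton_singleton_iff [Fintype α] {i j : α} (hij : i ≠ j) {C : Finset α}
    (hC : C ⊆ {i, j}ᶜ) (I : Finset α) :
    (#I = 4 ∧ #(I ∩ {i}) = 1 ∧ #(I ∩ {j}) = 1 ∧ #(I ∩ C) = 1 ∧ #(I ∩ ({i, j}ᶜ \ C)) = 1)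
      ↔ (#I = 4 ∧ {i, j} ⊆ I) ∧ #(I ∩ C) = 1 := by
  simp only [card_inter_singleton_eq_one_iff, insert_subset_iff, singleton_subset_iff]
  refine ⟨fun ⟨h4, hi, hj, hC1, _⟩ => ⟨⟨h4, hi, hj⟩, hC1⟩, fun ⟨⟨h4, hi, hj⟩, hC1⟩ => ?_⟩
  refine ⟨h4, hi, hj, hC1, ?_⟩
  have hrest : #(I \ {i, j}) = 2 := by
    rw [card_sdiff_of_subset (by simp [insert_subset_iff, hi, hj]), h4, card_pair hij]
  have hsplit := card_inter_add_card_sdiff (I \ {i, j}) C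
  have hC' : I \ {i, j} ∩ C = I ∩ C := by
    ext x; have := @hC x; simp only [mem_inter, mem_sdiff, mem_compl] at this ⊢; tauto
  have hD' : (I \ {i, j}) \ C = I ∩ ({i, j}ᶜ \ C) := by
    ext x; simp only [mem_inter, mem_sdiff, mem_compl]; tauto
  rw [hC', hD'] at hsplit
  omega

variable {β : Type*} [AddCommMonoid β]

theorem sum_powersetCard_succ_sum (K : Finset α) (n : ℕ) (f : α → β) :
    ∑ C ∈ K.powersetCard (n + 1), ∑ x ∈ C, f x = (#K - 1).choose n • ∑ x ∈ K, f x := by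
  rw [sum_comm' (t' := K) (s' := fun x => {C ∈ K.powersetCard (n + 1) | {x} ⊆ C}), smul_sum]
  · refine sum_congr rfl fun x hx => ?_
    rw [sum_const, card_filter_powersetCard_subset _ _ _ (singleton_subset_iff.mpr hx) (by simp)]
    simp
  · intro C x
    simp only [mem_filter, mem_powersetCard, singleton_subset_iff]
    exact ⟨fun ⟨⟨hCK, hC⟩, hx⟩ => ⟨⟨⟨hCK, hC⟩, hx⟩, hCK hx⟩, fun ⟨⟨hC, hx⟩, _⟩ => ⟨hC, hx⟩⟩

theorem sum_powersetCard_two_sum_filter_card_inter_eq_one (K : Finset α)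
    (𝒮 : Finset (Finset α)) (f : Finset α → β) :
    ∑ C ∈ K.powersetCard 2, ∑ I ∈ 𝒮 with #(I ∩ C) = 1, f I
      = ∑ I ∈ 𝒮, (#(I ∩ K) * #(K \ I)) • f I := by
  rw [sum_comm' (t' := 𝒮) (s' := fun I => {C ∈ K.powersetCard 2 | #(I ∩ C) = 1})]
  · simp only [sum_const, card_filter_powersetCard_two_card_inter_eq_one]
  · intro C I
    simp only [mem_filter]
    tauto

end Counting

theorem FNef.nonneg_of_singleton_tails {a l m : ℚ} {s : Finset (Fin 7) → ℚ} {p : Fin 7 → ℚ}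
    (hF : FNef a l m s p) {i j : Fin 7} (hij : i ≠ j) {C : Finset (Fin 7)}
    (hC : C ∈ ({i, j}ᶜ : Finset (Fin 7)).powersetCard 2) :
    0 ≤ ∑ I ∈ {I : Finset (Fin 7) | #I = 4 ∧ {i, j} ⊆ I} with #(I ∩ C) = 1, s I
      + (a + m) * (p i + p j) + (-a + m) * ∑ x ∈ C, p x
      + m * ∑ x ∈ ({i, j}ᶜ : Finset (Fin 7)) \ C, p x := by
  obtain ⟨hCK, hC2⟩ := mem_powersetCard.mp hC
  have hD3 : #(({i, j}ᶜ : Finset (Fin 7)) \ C) = 3 := by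
    rw [card_sdiff_of_subset hCK, card_compl, card_pair hij, hC2]; rfl
  have hpair : ({i} : Finset (Fin 7)) ∪ {j} = {i, j} := by ext; simp
  have hiC : i ∉ C := fun h => by simpa using hCK h
  have hjC : j ∉ C := fun h => by simpa using hCK h
  have hcover : {i} ∪ {j} ∪ C ∪ ({i, j}ᶜ \ C) = univ := by
    rw [union_assoc, union_sdiff_of_subset hCK, hpair, union_compl]
  have h := (hF {i} {j} C ({i, j}ᶜ \ C) (by simpa using hij) (by simpa using hiC) (by simp)
    (by simpa using hjC) (by simp) disjoint_sdiff hcover (singleton_nonempty i) (singleton_nonempty j)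
    (card_pos.mp (by omega)) (card_pos.mp (by omega))).2.1
    ⟨card_singleton i, card_singleton j, hC2, hD3⟩
  rw [hpair, sum_pair hij] at h
  rwa [filter_filter, ← filter_congr fun I _ => transversal_singleton_singleton_iff hij hCK I]

/-- Summing the F-inequalities over the ten F-curves of type `(1:1:2:3)` with singleton
spine tails `{i}` and `{j}` gives
`18 c_{ij} + (−8α−18λ+10μ)(p_i+p_j) + (−4α−18λ+10μ) ∑_{k∉{i,j}} p_k ≥ 0`. -/
theorem stmt5 (a l m : ℚ) (s : Finset (Fin 7) → ℚ) (p : Fin 7 → ℚ)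
    (hF : FNef a l m s p) (i j : Fin 7) (hij : i ≠ j) :
    0 ≤ 18 * cJ a l m s p {i, j}
        + (-8*a - 18*l + 10*m) * (p i + p j)
        + (-4*a - 18*l + 10*m) * (∑ k ∈ ({i, j}ᶜ : Finset (Fin 7)), p k) := by
  set K : Finset (Fin 7) := {i, j}ᶜ with hK
  set 𝒮 : Finset (Finset (Fin 7)) := {I | #I = 4 ∧ {i, j} ⊆ I} with h𝒮
  have hK5 : #K = 5 := by rw [hK, card_compl, card_pair hij]; rfl
  have hP10 : #(K.powersetCard 2) = 10 := by rw [card_powersetCard, hK5]; rfl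
  have hs : ∑ C ∈ K.powersetCard 2, ∑ I ∈ 𝒮 with #(I ∩ C) = 1, s I = 6 * ∑ I ∈ 𝒮, s I := by
    rw [sum_powersetCard_two_sum_filter_card_inter_eq_one, mul_sum]
    refine sum_congr rfl fun I hI => ?_
    obtain ⟨h4, hsub⟩ := (mem_filter.mp hI).2
    have hIK : #(I ∩ K) = 2 := by
      rw [hK, ← sdiff_eq_inter_compl, card_sdiff_of_subset hsub, h4, card_pair hij]
    have hKI : #(K \ I) = 3 := by
      rw [hK, sdiff_eq_inter_compl, ← compl_union, union_eq_right.mpr hsub, card_compl, h4]; rfl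
    rw [hIK, hKI, nsmul_eq_mul]; norm_num
  have hC : ∑ C ∈ K.powersetCard 2, ∑ x ∈ C, p x = 4 * ∑ x ∈ K, p x := by
    rw [sum_powersetCard_succ_sum, hK5, nsmul_eq_mul]; norm_num
  have hD : ∑ C ∈ K.powersetCard 2, ∑ x ∈ K \ C, p x = 6 * ∑ x ∈ K, p x := by
    rw [sum_congr rfl fun C hC => sum_sdiff_eq_sub (mem_powersetCard.mp hC).1, sum_sub_distrib,
      hC, sum_const, hP10, nsmul_eq_mul]; ring
  have hsum := sum_nonneg fun C hC => hF.nonneg_of_singleton_tails hij hC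
  rw [sum_add_distrib, sum_add_distrib, sum_add_distrib, hs, sum_const, hP10,
    ← mul_sum, ← mul_sum, hC, hD] at hsum
  rw [cJ, if_pos (card_pair hij), sum_pair hij, ← h𝒮, ← hK]
  rw [nsmul_eq_mul, Nat.cast_ofNat] at hsum
  linarith
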